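/- Let k be a field of characteristic zero, let Ω be a k-vector space of finite dimension n ≥ 1, let ⋆ ∈ Ω, and let Λ be a subspace of (Ω⊗Ω) ⊕ (Ω⊗Ω). There exists a unit action (α, β) for ⋆ with α = β that is compatible with Λ if and only if there exists a basis (∘₁, …, ∘ₙ) of Ω with ⋆ = ∘₁ + ⋯ + ∘ₙ such that Λ is contained in the span of the following elements of (Ω⊗Ω) ⊕ (Ω⊗Ω): (∘₁⊗∘₁, ∘₁⊗∘₁); (∘₁⊗∘ᵢ, ∘₁⊗∘ᵢ) + (∘ᵢ⊗∘₁, ∘ᵢ⊗∘₁) for 2 ≤ i ≤ n; and (∘ᵢ⊗∘ⱼ, 0) and (0, ∘ᵢ⊗∘ⱼ) for 2 ≤ i, j ≤ n. -/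

import Mathlib

open TensorProduct
section Defs

variable {k : Type*} [Field k]

noncomputable def contrL {Ω : Type*} [AddCommGroup Ω] [Module k Ω]
    (φ : Module.Dual k Ω) : Ω ⊗[k] Ω →ₗ[k] Ω :=
  (TensorProduct.lid k Ω).toLinearMap ∘ₗ TensorProduct.map φ LinearMap.id

noncomputable def contrR {Ω : Type*} [AddCommGroup Ω] [Module k Ω]
    (φ : Module.Dual k Ω) : Ω ⊗[k] Ω →ₗ[k] Ω :=
  (TensorProduct.rid k Ω).toLinearMap ∘ₗ TensorProduct.map LinearMap.id φ

noncomputable def contrB {Ω₁ Ω₂ : Type*} [AddCommGroup Ω₁] [Module k Ω₁]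
    [AddCommGroup Ω₂] [Module k Ω₂]
    (φ : Module.Dual k Ω₁) (ψ : Module.Dual k Ω₂) : Ω₁ ⊗[k] Ω₂ →ₗ[k] k :=
  (TensorProduct.lid k k).toLinearMap ∘ₗ TensorProduct.map φ ψ

/-- The coherence equations (C1)-(C5) for a pair `uv ∈ (Ω⊗Ω) × (Ω⊗Ω)`. -/
def CoherenceEqs {Ω : Type*} [AddCommGroup Ω] [Module k Ω]
    (α β : Module.Dual k Ω) (star : Ω)
    (uv : (Ω ⊗[k] Ω) × (Ω ⊗[k] Ω)) : Prop :=
  contrL β uv.1 = contrL β uv.2 ∧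
  contrL α uv.1 = contrR β uv.2 ∧
  contrR α uv.1 = contrR α uv.2 ∧
  contrR β uv.1 = contrB β β uv.2 • star ∧
  contrB α α uv.1 • star = contrL α uv.2

/-- The compatibility equations (C1)-(C3). -/
def CompatEqs {Ω : Type*} [AddCommGroup Ω] [Module k Ω]
    (α β : Module.Dual k Ω)
    (uv : (Ω ⊗[k] Ω) × (Ω ⊗[k] Ω)) : Prop :=
  contrL β uv.1 = contrL β uv.2 ∧
  contrL α uv.1 = contrR β uv.2 ∧
  contrR α uv.1 = contrR α uv.2

def IsCoherent {Ω : Type*} [AddCommGroup Ω] [Module k Ω]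
    (α β : Module.Dual k Ω) (star : Ω)
    (Λ : Submodule k ((Ω ⊗[k] Ω) × (Ω ⊗[k] Ω))) : Prop :=
  ∀ uv ∈ Λ, CoherenceEqs α β star uv

def IsCompatible {Ω : Type*} [AddCommGroup Ω] [Module k Ω]
    (α β : Module.Dual k Ω)
    (Λ : Submodule k ((Ω ⊗[k] Ω) × (Ω ⊗[k] Ω))) : Prop :=
  ∀ uv ∈ Λ, CompatEqs α β uv

end Defs

section Aux

open Module

variable {k : Type*} [Field k] {Ω : Type*} [AddCommGroup Ω] [Module k Ω]

@[simp] lemma contrL_tmul (φ : Module.Dual k Ω) (a c : Ω) :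
    contrL φ (a ⊗ₜ[k] c) = φ a • c := by
  simp [contrL]

@[simp] lemma contrR_tmul (φ : Module.Dual k Ω) (a c : Ω) :
    contrR φ (a ⊗ₜ[k] c) = φ c • a := by
  simp [contrR]

variable {m : ℕ}

lemma zero_ne_succ (i : Fin m) : (0 : Fin (m+1)) ≠ i.succ := (Fin.succ_ne_zero i).symm

/-- The generating set from the classification. -/
def genSet (b : Basis (Fin (m+1)) k Ω) : Set ((Ω ⊗[k] Ω) × (Ω ⊗[k] Ω)) :=
  ({(b 0 ⊗ₜ[k] b 0, b 0 ⊗ₜ[k] b 0)} ∪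
    {x | ∃ i : Fin (m+1), 1 ≤ (i : ℕ) ∧
      x = (b 0 ⊗ₜ[k] b i, b 0 ⊗ₜ[k] b i) + (b i ⊗ₜ[k] b 0, b i ⊗ₜ[k] b 0)} ∪
    {x | ∃ i j : Fin (m+1), 1 ≤ (i : ℕ) ∧ 1 ≤ (j : ℕ) ∧
      (x = (b i ⊗ₜ[k] b j, 0) ∨ x = (0, b i ⊗ₜ[k] b j))})

lemma reprL (b : Basis (Fin (m+1)) k Ω) (α : Module.Dual k Ω)
    (hα : ∀ i, α (b i) = if i = 0 then 1 else 0) (w : Ω ⊗[k] Ω) (j : Fin (m+1)) :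
    b.repr (contrL α w) j = (b.tensorProduct b).repr w (0, j) := by
  have h : (b.coord j) ∘ₗ contrL α = (b.tensorProduct b).coord (0, j) := by
    apply (b.tensorProduct b).ext
    rintro ⟨p, q⟩
    simp only [Basis.tensorProduct_apply, LinearMap.comp_apply, contrL_tmul,
      Basis.coord_apply, map_smul, Basis.repr_self, Finsupp.smul_apply,
      Finsupp.single_apply, hα, Prod.mk.injEq]
    split_ifs <;> simp_all
  exact LinearMap.congr_fun h w

lemma reprR (b : Basis (Fin (m+1)) k Ω) (α : Module.Dual k Ω)
    (hα : ∀ i, α (b i) = if i = 0 then 1 else 0) (w : Ω ⊗[k] Ω) (j : Fin (m+1)) :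
    b.repr (contrR α w) j = (b.tensorProduct b).repr w (j, 0) := by
  have h : (b.coord j) ∘ₗ contrR α = (b.tensorProduct b).coord (j, 0) := by
    apply (b.tensorProduct b).ext
    rintro ⟨p, q⟩
    simp only [Basis.tensorProduct_apply, LinearMap.comp_apply, contrR_tmul,
      Basis.coord_apply, map_smul, Basis.repr_self, Finsupp.smul_apply,
      Finsupp.single_apply, hα, Prod.mk.injEq]
    split_ifs <;> simp_all
  exact LinearMap.congr_fun h w

lemma compatEqs_zero (α β : Module.Dual k Ω) : CompatEqs α β (0 : (Ω ⊗[k] Ω) × (Ω ⊗[k] Ω)) := by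
  simp [CompatEqs]

lemma compatEqs_add (α β : Module.Dual k Ω) {x y : (Ω ⊗[k] Ω) × (Ω ⊗[k] Ω)}
    (hx : CompatEqs α β x) (hy : CompatEqs α β y) : CompatEqs α β (x + y) := by
  obtain ⟨h1, h2, h3⟩ := hx
  obtain ⟨g1, g2, g3⟩ := hy
  refine ⟨?_, ?_, ?_⟩ <;> simp [Prod.fst_add, Prod.snd_add, map_add, h1, h2, h3, g1, g2, g3]

lemma compatEqs_smul (α β : Module.Dual k Ω) (r : k) {x : (Ω ⊗[k] Ω) × (Ω ⊗[k] Ω)}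
    (hx : CompatEqs α β x) : CompatEqs α β (r • x) := by
  obtain ⟨h1, h2, h3⟩ := hx
  refine ⟨?_, ?_, ?_⟩ <;> simp [Prod.smul_fst, Prod.smul_snd, map_smul, h1, h2, h3]

lemma genSet_compat (b : Basis (Fin (m+1)) k Ω) (α : Module.Dual k Ω)
    (hα : ∀ i, α (b i) = if i = 0 then 1 else 0) :
    ∀ x ∈ genSet b, CompatEqs α α x := by
  rintro x ((hx | ⟨i, hi, rfl⟩) | ⟨i, j, hi, hj, rfl | rfl⟩)
  · rw [Set.mem_singleton_iff] at hx
    subst hx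
    refine ⟨rfl, ?_, rfl⟩
    simp [hα]
  · have hi0 : i ≠ 0 := by rintro rfl; simp at hi
    refine ⟨rfl, ?_, rfl⟩
    simp [Prod.fst_add, Prod.snd_add, map_add, hα, hi0]
  · have hi0 : i ≠ 0 := by rintro rfl; simp at hi
    have hj0 : j ≠ 0 := by rintro rfl; simp at hj
    refine ⟨?_, ?_, ?_⟩ <;> simp [hα, hi0, hj0]
  · have hi0 : i ≠ 0 := by rintro rfl; simp at hi
    have hj0 : j ≠ 0 := by rintro rfl; simp at hj
    refine ⟨?_, ?_, ?_⟩ <;> simp [hα, hi0, hj0]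

lemma compat_mem_span (b : Basis (Fin (m+1)) k Ω) (α : Module.Dual k Ω)
    (hα : ∀ i, α (b i) = if i = 0 then 1 else 0)
    {uv : (Ω ⊗[k] Ω) × (Ω ⊗[k] Ω)} (h : CompatEqs α α uv) :
    uv ∈ Submodule.span k (genSet b) := by
  obtain ⟨u, v⟩ := uv
  obtain ⟨h1, h2, h3⟩ := h
  set T := b.tensorProduct b with hT
  have e1 : ∀ j, T.repr u (0, j) = T.repr v (0, j) := by
    intro j
    rw [← reprL b α hα u j, ← reprL b α hα v j, h1]
  have e2 : ∀ j, T.repr u (0, j) = T.repr v (j, 0) := by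
    intro j
    rw [← reprL b α hα u j, ← reprR b α hα v j, h2]
  have e3 : ∀ i, T.repr u (i, 0) = T.repr v (i, 0) := by
    intro i
    rw [← reprR b α hα u i, ← reprR b α hα v i, h3]
  have e4 : ∀ i, T.repr u (i, 0) = T.repr u (0, i) := fun i => by rw [e3 i, ← e2 i]
  have key : (u, v) =
      T.repr u (0, 0) • ((b 0 ⊗ₜ[k] b 0, b 0 ⊗ₜ[k] b 0) : (Ω ⊗[k] Ω) × (Ω ⊗[k] Ω))
      + ∑ i : Fin m, T.repr u (0, i.succ) •
          (((b 0 ⊗ₜ[k] b i.succ, b 0 ⊗ₜ[k] b i.succ) : (Ω ⊗[k] Ω) × (Ω ⊗[k] Ω))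
            + (b i.succ ⊗ₜ[k] b 0, b i.succ ⊗ₜ[k] b 0))
      + ∑ i : Fin m, ∑ j : Fin m, T.repr u (i.succ, j.succ) •
          (((b i.succ ⊗ₜ[k] b j.succ, 0) : (Ω ⊗[k] Ω) × (Ω ⊗[k] Ω)))
      + ∑ i : Fin m, ∑ j : Fin m, T.repr v (i.succ, j.succ) •
          (((0, b i.succ ⊗ₜ[k] b j.succ) : (Ω ⊗[k] Ω) × (Ω ⊗[k] Ω))) := by
    have hbT : ∀ i j : Fin (m+1), b i ⊗ₜ[k] b j = T (i, j) := by
      intro i j; rw [hT, Basis.tensorProduct_apply]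
    refine Prod.ext ?_ ?_
    · apply T.repr.injective
      refine Finsupp.ext fun pq => ?_
      obtain ⟨p, q⟩ := pq
      simp only [Prod.fst_add, Prod.smul_fst, Prod.fst_sum, smul_zero,
        Finset.sum_const_zero, add_zero, hbT, map_add, map_smul, map_sum,
        Basis.repr_self, Finsupp.coe_add, Finsupp.coe_smul, Pi.add_apply,
        Pi.smul_apply, Finsupp.finset_sum_apply, Finsupp.single_apply,
        Finsupp.add_apply, smul_eq_mul, Prod.mk.injEq]
      induction p using Fin.cases with
      | zero =>
        induction q using Fin.cases with
        | zero => simp [Fin.succ_ne_zero, zero_ne_succ]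
        | succ q =>
          simp [Fin.succ_ne_zero, zero_ne_succ, Fin.succ_inj, ite_and,
            Finset.sum_ite_eq, Finset.sum_ite_eq', mul_ite]
      | succ p =>
        induction q using Fin.cases with
        | zero =>
          rw [e4 p.succ]
          simp [Fin.succ_ne_zero, zero_ne_succ, Fin.succ_inj, ite_and,
            Finset.sum_ite_eq, Finset.sum_ite_eq', mul_ite]
        | succ q =>
          simp [Fin.succ_ne_zero, zero_ne_succ, Fin.succ_inj, ite_and,
            Finset.sum_ite_eq, Finset.sum_ite_eq', mul_ite]
    · apply T.repr.injective
      refine Finsupp.ext fun pq => ?_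
      obtain ⟨p, q⟩ := pq
      simp only [Prod.snd_add, Prod.smul_snd, Prod.snd_sum, smul_zero,
        Finset.sum_const_zero, add_zero, zero_add, hbT, map_add, map_smul, map_sum,
        Basis.repr_self, Finsupp.coe_add, Finsupp.coe_smul, Pi.add_apply,
        Pi.smul_apply, Finsupp.finset_sum_apply, Finsupp.single_apply,
        Finsupp.add_apply, smul_eq_mul, Prod.mk.injEq]
      induction p using Fin.cases with
      | zero =>
        induction q using Fin.cases with
        | zero =>
          rw [← e1 0]
          simp [Fin.succ_ne_zero, zero_ne_succ]
        | succ q =>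
          rw [← e1 q.succ]
          simp [Fin.succ_ne_zero, zero_ne_succ, Fin.succ_inj, ite_and,
            Finset.sum_ite_eq, Finset.sum_ite_eq', mul_ite]
      | succ p =>
        induction q using Fin.cases with
        | zero =>
          rw [← e2 p.succ]
          simp [Fin.succ_ne_zero, zero_ne_succ, Fin.succ_inj, ite_and,
            Finset.sum_ite_eq, Finset.sum_ite_eq', mul_ite]
        | succ q =>
          simp [Fin.succ_ne_zero, zero_ne_succ, Fin.succ_inj, ite_and,
            Finset.sum_ite_eq, Finset.sum_ite_eq', mul_ite]
  rw [key]
  have mem0 : ((b 0 ⊗ₜ[k] b 0, b 0 ⊗ₜ[k] b 0) : (Ω ⊗[k] Ω) × (Ω ⊗[k] Ω)) ∈ genSet b :=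
    Or.inl (Or.inl rfl)
  refine Submodule.add_mem _ (Submodule.add_mem _ (Submodule.add_mem _
    (Submodule.smul_mem _ _ (Submodule.subset_span mem0)) ?_) ?_) ?_
  · refine Submodule.sum_mem _ fun i _ => Submodule.smul_mem _ _ (Submodule.subset_span ?_)
    exact Or.inl (Or.inr ⟨i.succ, by simp [Fin.val_succ], rfl⟩)
  · refine Submodule.sum_mem _ fun i _ => Submodule.sum_mem _ fun j _ =>
      Submodule.smul_mem _ _ (Submodule.subset_span ?_)
    exact Or.inr ⟨i.succ, j.succ, by simp [Fin.val_succ], by simp [Fin.val_succ], Or.inl rfl⟩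
  · refine Submodule.sum_mem _ fun i _ => Submodule.sum_mem _ fun j _ =>
      Submodule.smul_mem _ _ (Submodule.subset_span ?_)
    exact Or.inr ⟨i.succ, j.succ, by simp [Fin.val_succ], by simp [Fin.val_succ], Or.inr rfl⟩

end Aux

/-- Classification of compatible unit actions with α = β (Theorem 3.1(4)). -/
theorem compatible_eq_classification
    {k : Type*} [Field k] [CharZero k]
    {Ω : Type*} [AddCommGroup Ω] [Module k Ω] [FiniteDimensional k Ω]
    (n : ℕ) (hn : 1 ≤ n) (hdim : Module.finrank k Ω = n)
    (star : Ω) (Λ : Submodule k ((Ω ⊗[k] Ω) × (Ω ⊗[k] Ω))) :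
    (∃ α β : Module.Dual k Ω,
        α star = 1 ∧ β star = 1 ∧ α = β ∧ IsCompatible α β Λ) ↔
    (∃ b : Module.Basis (Fin n) k Ω, star = ∑ i, b i ∧
      Λ ≤ Submodule.span k
        (({(b ⟨0, by omega⟩ ⊗ₜ[k] b ⟨0, by omega⟩,
            b ⟨0, by omega⟩ ⊗ₜ[k] b ⟨0, by omega⟩)} ∪
          {x | ∃ i : Fin n, 1 ≤ (i : ℕ) ∧
            x = (b ⟨0, by omega⟩ ⊗ₜ[k] b i, b ⟨0, by omega⟩ ⊗ₜ[k] b i) +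
                (b i ⊗ₜ[k] b ⟨0, by omega⟩, b i ⊗ₜ[k] b ⟨0, by omega⟩)} ∪
          {x | ∃ i j : Fin n, 1 ≤ (i : ℕ) ∧ 1 ≤ (j : ℕ) ∧
            (x = (b i ⊗ₜ[k] b j, 0) ∨ x = (0, b i ⊗ₜ[k] b j))} :
          Set ((Ω ⊗[k] Ω) × (Ω ⊗[k] Ω))))) := by
  obtain ⟨m, rfl⟩ : ∃ m, n = m + 1 := ⟨n - 1, by omega⟩
  constructor
  · rintro ⟨α, β, hα1, hβ1, rfl, hcompat⟩
    have hane : α ≠ 0 := fun h => by simp [h] at hα1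
    have hker : Module.finrank k (LinearMap.ker α) = m := by
      have h2 := Module.Dual.finrank_ker_add_one_of_ne_zero hane
      omega
    let c := Module.finBasisOfFinrankEq k (LinearMap.ker α) hker
    set y : Ω := star - ∑ i, (c i : Ω) with hy
    have hαc : ∀ i, α ((c i : Ω)) = 0 := fun i => LinearMap.mem_ker.mp (c i).2
    have hαy : α y = 1 := by simp [hy, map_sub, map_sum, hαc, hα1]
    have hli : ∀ (r : k), ∀ x ∈ LinearMap.ker α, r • y + x = 0 → r = 0 := by
      intro r x hx hr
      have h3 := congrArg α hr
      simpa [hαy, LinearMap.mem_ker.mp hx] using h3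
    have hsp : ∀ z : Ω, ∃ r : k, z + r • y ∈ LinearMap.ker α := fun z =>
      ⟨-α z, by simp [LinearMap.mem_ker, hαy]⟩
    let b := Module.Basis.mkFinCons y c hli hsp
    have hb0 : b 0 = y := by simp [b, Module.Basis.coe_mkFinCons]
    have hbs : ∀ i : Fin m, b i.succ = (c i : Ω) := by
      intro i; simp [b, Module.Basis.coe_mkFinCons]
    have hb : ∀ i : Fin (m+1), α (b i) = if i = 0 then 1 else 0 := by
      intro i
      induction i using Fin.cases with
      | zero => simp [hb0, hαy]
      | succ i => simp [hbs, hαc i, Fin.succ_ne_zero]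
    refine ⟨b, ?_, ?_⟩
    · rw [Fin.sum_univ_succ, hb0]
      simp only [hbs]
      rw [hy]
      abel
    · intro uv huv
      exact compat_mem_span b α hb (hcompat uv huv)
  · rintro ⟨b, hstar, hΛ⟩
    have hαb : ∀ i : Fin (m+1), b.coord 0 (b i) = if i = 0 then 1 else 0 := by
      intro i
      simp [Module.Basis.coord_apply, Module.Basis.repr_self, Finsupp.single_apply]
    refine ⟨b.coord 0, b.coord 0, ?_, ?_, rfl, ?_⟩
    · rw [hstar]
      simp [map_sum, Module.Basis.coord_apply, Module.Basis.repr_self, Finsupp.single_apply]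
    · rw [hstar]
      simp [map_sum, Module.Basis.coord_apply, Module.Basis.repr_self, Finsupp.single_apply]
    · intro uv huv
      have h' : uv ∈ Submodule.span k (genSet b) := hΛ huv
      exact Submodule.span_induction
        (p := fun x _ => CompatEqs (b.coord 0) (b.coord 0) x)
        (fun x hx => genSet_compat b _ hαb x hx)
        (compatEqs_zero _ _)
        (fun x y _ _ hx hy => compatEqs_add _ _ hx hy)
        (fun r x _ hx => compatEqs_smul _ _ r hx) h'
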